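/- Let D = (D_X,D_Y,D_Z) ∈ ℝ³ have entries all of the same sign, let t = (t_X,t_Y,t_Z) ∈ ℝ³, and let N' be the single-qubit normal-form map with parameters (D,t). Suppose N' maps every density matrix (positive semidefinite 2×2 matrix of trace 1) to a density matrix. Then Υ(D,t) ≤ 1. If moreover 0 < max(D_X²,D_Y²,D_Z²) < 1 or 0 < t_X²+t_Y²+t_Z² < 1, then Υ(D,t) < 1. -/

import Mathlib

/-!
A unit vector `a` is the Bloch vector of the pure state `(I + a·σ)/2`, which `N'` sends to the
operator with Bloch vector `Da + t`; positivity of a 2×2 matrix of trace one is `det ≥ 0`,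
i.e. `|Da + t| ≤ 1`. Adding this for `a` and `-a` gives
`Σ a_Q² D_Q² + |t|² + 2|Σ D_Q a_Q t_Q| ≤ 1`, and `(a·t)² = |t|² - |t - (a·t)a|²`, so the
objective of `Υ` is at most one on the sphere. It equals one only if `t = (a·t)a` and
`(a·t) Σ D_Q a_Q² = 0`; when `D` has constant sign the second factor vanishes only if
`Σ a_Q² D_Q² = 0`, and in either case the strictness hypotheses push the objective below one.
The sphere is compact, so the maximum `Υ` is attained and is then `< 1`.
-/

open scoped Kronecker
open Matrix
open scoped ComplexOrder

noncomputable section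

abbrev QMat := Matrix (Fin 2) (Fin 2) ℂ

abbrev NMat (n : ℕ) := Matrix (Fin n → Fin 2) (Fin n → Fin 2) ℂ

/-- The four single-qubit Pauli matrices `I, X, Y, Z`. -/
def pauli : Fin 4 → QMat :=
  ![1, !![0, 1; 1, 0], !![0, -Complex.I; Complex.I, 0], !![1, 0; 0, -1]]

/-- The non-identity Paulis `X, Y, Z`. -/
def pauliXYZ (i : Fin 3) : QMat := pauli i.succ

/-- The `n`-qubit Pauli string indexed by `s : Fin n → Fin 4`. -/
def pauliString {n : ℕ} (s : Fin n → Fin 4) : NMat n :=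
  Matrix.of fun i j => ∏ k, pauli (s k) (i k) (j k)

/-- Support of a Pauli string. -/
def psupp {n : ℕ} (s : Fin n → Fin 4) : Finset (Fin n) :=
  Finset.univ.filter fun k => s k ≠ 0

/-- The observable with real Pauli coefficients `a`. -/
def obsOf {n : ℕ} (a : (Fin n → Fin 4) → ℝ) : NMat n :=
  ∑ s : Fin n → Fin 4, (a s : ℂ) • pauliString s

/-- Normalized Frobenius norm squared, `‖M‖_F² = Tr[Mᴴ M]/dim`. -/
def frobSq {m : Type*} [Fintype m] (M : Matrix m m ℂ) : ℝ :=
  (Matrix.trace (Mᴴ * M)).re / (Fintype.card m : ℝ)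

def IsUnitary {m : Type*} [Fintype m] [DecidableEq m] (U : Matrix m m ℂ) : Prop :=
  U * Uᴴ = 1 ∧ Uᴴ * U = 1

/-- Hilbert–Schmidt adjoint of a (linear) map on matrices:
`Φ†(A) i j = conj (Tr[Aᴴ Φ(E_{ij})])`. -/
def hsAdj {m : Type*} [Fintype m] [DecidableEq m]
    (Φ : Matrix m m ℂ → Matrix m m ℂ) (A : Matrix m m ℂ) : Matrix m m ℂ :=
  Matrix.of fun i j => (starRingEnd ℂ) (Matrix.trace (Aᴴ * Φ (Matrix.single i j 1)))

/-- Pauli transfer matrix entry of a single-qubit map. -/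
def ptm (Φ : QMat → QMat) (a b : Fin 4) : ℂ :=
  Matrix.trace (pauli a * Φ (pauli b)) / 2

/-- Tensor product `Φ 0 ⊗ Φ 1 ⊗ ⋯ ⊗ Φ (n-1)` of single-qubit (linear) maps,
defined via the Pauli transfer matrices. -/
def tensorMap {n : ℕ} (Φ : Fin n → QMat → QMat) (M : NMat n) : NMat n :=
  ∑ s : Fin n → Fin 4, ∑ t : Fin n → Fin 4,
    ((∏ k, ptm (Φ k) (s k) (t k)) * (Matrix.trace (pauliString t * M) / ((2 : ℂ) ^ n))) •
      pauliString s

/-- `n`-fold tensor power `Φ^{⊗n}` of a single-qubit (linear) map. -/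
def tensorPow (n : ℕ) (Φ : QMat → QMat) : NMat n → NMat n :=
  tensorMap fun _ => Φ

/-- Tensor product of `n` single-qubit matrices. -/
def qprod {n : ℕ} (V : Fin n → QMat) : NMat n :=
  Matrix.of fun i j => ∏ k, V k (i k) (j k)

/-- The single-qubit normal-form map `N'` with parameters `(D, t)`:
`N'(I) = I + Σ t_i σ_i` and `N'(σ_i) = D_i σ_i`. -/
def normalForm (D t : Fin 3 → ℝ) (M : QMat) : QMat :=
  (Matrix.trace M / 2) • (1 + ∑ i, (t i : ℂ) • pauliXYZ i) +
    ∑ i, ((D i : ℂ) * (Matrix.trace (pauliXYZ i * M) / 2)) • pauliXYZ i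

/-- `Υ(D,t) = max_{‖a‖₂=1} Σ_i a_i² D_i² + (Σ_i a_i t_i)²`. -/
def Upsilon (D t : Fin 3 → ℝ) : ℝ :=
  sSup { r : ℝ | ∃ a : Fin 3 → ℝ, (∑ i, a i ^ 2) = 1 ∧
    r = (∑ i, a i ^ 2 * D i ^ 2) + (∑ i, a i * t i) ^ 2 }

/-- Choi matrix of a single-qubit map. -/
def choi (Φ : QMat → QMat) : Matrix (Fin 2 × Fin 2) (Fin 2 × Fin 2) ℂ :=
  Matrix.of fun p q => Φ (Matrix.single p.1 q.1 1) p.2 q.2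

/-- A single-qubit quantum channel: linear, trace preserving, completely positive. -/
structure IsChannel (Φ : QMat → QMat) : Prop where
  linear : IsLinearMap ℂ Φ
  tracePreserving : ∀ M, Matrix.trace (Φ M) = Matrix.trace M
  completelyPositive : (choi Φ).PosSemidef

/-- Unitary 1-design (finitely supported distribution). -/
def IsOneDesign {ι : Type*} [Fintype ι] (w : ι → ℝ) (W : ι → QMat) : Prop :=
  ∀ M : QMat, ∑ i, (w i : ℂ) • (W i * M * (W i)ᴴ) = (Matrix.trace M / 2) • (1 : QMat)

/-- The swap (flip) operator on two qubits. -/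
def swapOp : Matrix (Fin 2 × Fin 2) (Fin 2 × Fin 2) ℂ :=
  Matrix.of fun p q => if p.1 = q.2 ∧ p.2 = q.1 then 1 else 0

/-- Unitary 2-design: the twirl of any `M` matches the Haar value
`c_I • 1 + c_F • F` (closed form of the Haar average on `U(2)`). -/
def IsTwoDesign {ι : Type*} [Fintype ι] (w : ι → ℝ) (W : ι → QMat) : Prop :=
  ∀ M : Matrix (Fin 2 × Fin 2) (Fin 2 × Fin 2) ℂ,
    ∑ i, (w i : ℂ) • ((W i ⊗ₖ W i) * M * (W i ⊗ₖ W i)ᴴ) =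
      ((Matrix.trace M - Matrix.trace (swapOp * M) / 2) / 3) •
          (1 : Matrix (Fin 2 × Fin 2) (Fin 2 × Fin 2) ℂ) +
        ((Matrix.trace (swapOp * M) - Matrix.trace M / 2) / 3) • swapOp

/-- `η`-approximate scrambler (finitely supported distribution over `U(2)`). -/
def IsApproxScrambler {ι : Type*} [Fintype ι] (η : ℝ) (w : ι → ℝ) (U : ι → QMat) : Prop :=
  (∀ a b : Fin 4, a ≠ b →
      ∑ i, (w i : ℂ) • (((U i)ᴴ * pauli a * U i) ⊗ₖ ((U i)ᴴ * pauli b * U i)) = 0) ∧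
    ∀ a b : Fin 3,
      ∑ i, w i * ((Matrix.trace (pauliXYZ a * U i * pauliXYZ b * (U i)ᴴ)).re / 2) ^ 2 ≤
        (1 + 2 * η) / 3

/-- Locally unbiased distribution over linear maps on `n`-qubit matrices. -/
def LocallyUnbiased (n : ℕ) {ι : Type*} [Fintype ι] (w : ι → ℝ)
    (C : ι → NMat n → NMat n) : Prop :=
  ∃ (m : ℕ) (v : Fin n → Fin m → ℝ) (W : Fin n → Fin m → QMat),
    (∀ j k, 0 ≤ v j k) ∧ (∀ j, ∑ k, v j k = 1) ∧ (∀ j k, IsUnitary (W j k)) ∧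
      (∀ j, IsOneDesign (v j) (W j)) ∧
      ∀ A B : NMat n,
        ∑ i, (w i : ℂ) • (C i A ⊗ₖ C i B) =
          ∑ i, ∑ f : Fin n → Fin m,
            ((w i * ∏ j, v j (f j) : ℝ) : ℂ) •
              (C i (qprod (fun j => W j (f j)) * A * (qprod fun j => W j (f j))ᴴ) ⊗ₖ
                C i (qprod (fun j => W j (f j)) * B * (qprod fun j => W j (f j))ᴴ))

/-- Pauli-invariant distribution over linear maps on `n`-qubit matrices. -/
def PauliInvariant (n : ℕ) {ι : Type*} [Fintype ι] (w : ι → ℝ)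
    (C : ι → NMat n → NMat n) : Prop :=
  ∀ A B : NMat n,
    ∑ i, (w i : ℂ) • (C i A ⊗ₖ C i B) =
      ((4 : ℂ) ^ n)⁻¹ • ∑ r : Fin n → Fin 4, ∑ i, (w i : ℂ) •
        (C i (pauliString r * A * pauliString r) ⊗ₖ C i (pauliString r * B * pauliString r))

/-- Fourier coefficient `Φ_γ(C) = Π_j 2^{-n} Tr[P_j C_j(P_{j-1})]` of a Pauli path. -/
def pathCoeff {n L : ℕ} (Cs : Fin L → NMat n → NMat n)
    (γ : Fin (L + 1) → Fin n → Fin 4) : ℂ :=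
  ∏ j : Fin L,
    (Matrix.trace (pauliString (γ j.succ) * Cs j (pauliString (γ j.castSucc))) / ((2 : ℂ) ^ n))

/-- Path weight `|γ| = Σ_{j=1}^L |P_j|`. -/
def pathWeight {n L : ℕ} (γ : Fin (L + 1) → Fin n → Fin 4) : ℕ :=
  ∑ j : Fin L, (psupp (γ j.succ)).card

/-- The (non-physical) map `Ñ_p` with `Ñ_p(I) = (N(I) - pI)/(1-p)` and
`Ñ_p(σ) = N(σ)/(1-p)` for `σ ∈ {X,Y,Z}`. -/
def tildeMap (N : QMat → QMat) (p : ℝ) (M : QMat) : QMat :=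
  (Matrix.trace M / 2) • (((1 : ℂ) - (p : ℂ))⁻¹ • (N 1 - (p : ℂ) • (1 : QMat))) +
    ∑ i : Fin 3, (Matrix.trace (pauliXYZ i * M) / 2) • (((1 : ℂ) - (p : ℂ))⁻¹ • N (pauliXYZ i))

/-- The layers of an `L`-layered noisy circuit: `C_j(ρ) = N^{⊗n}(U_j ρ U_j†)` for `j < L`,
and the last layer is followed by the single-qubit layer `V`. -/
def layerMaps {n L : ℕ} (Nm : QMat → QMat) (U : Fin L → NMat n) (Vt : NMat n)
    (j : Fin L) (ρ : NMat n) : NMat n :=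
  if j.val = L - 1 then Vt * tensorPow n Nm (U j * ρ * (U j)ᴴ) * Vtᴴ
  else tensorPow n Nm (U j * ρ * (U j)ᴴ)

/-- Composition `C_L ∘ ⋯ ∘ C_1` of the layers. -/
def circuitOf {n L : ℕ} (lm : Fin L → NMat n → NMat n) (ρ : NMat n) : NMat n :=
  (List.finRange L).foldl (fun σ j => lm j σ) ρ

/-- Operator (spectral) norm of a matrix, as the `ℓ²→ℓ²` operator norm. -/
def specNorm {m : Type*} [Fintype m] (M : Matrix m m ℂ) : ℝ :=
  Real.sqrt (sSup { r : ℝ | ∃ v : m → ℂ,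
    (∑ x, Complex.normSq (v x)) = 1 ∧ r = ∑ x, Complex.normSq (M.mulVec v x) })

/-- Trace norm `‖M‖₁ = Tr √(Mᴴ M)` (sum of singular values). -/
def traceNorm {m : Type*} [Fintype m] [DecidableEq m] (M : Matrix m m ℂ) : ℝ :=
  (Matrix.trace (((Matrix.posSemidef_conjTranspose_mul_self M).isHermitian.eigenvectorUnitary :
      Matrix m m ℂ) * Matrix.diagonal ((fun x : ℝ => (x : ℂ)) ∘ Real.sqrt ∘
        (Matrix.posSemidef_conjTranspose_mul_self M).isHermitian.eigenvalues) *
      (star (Matrix.posSemidef_conjTranspose_mul_self M).isHermitian.eigenvectorUnitary :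
        Matrix m m ℂ))).re

def blochMatrix (v : Fin 3 → ℝ) : QMat :=
  (1 / 2 : ℂ) • (1 + ∑ i, (v i : ℂ) • pauliXYZ i)

lemma blochMatrix_eq (v : Fin 3 → ℝ) :
    blochMatrix v = !![(1 + (v 2 : ℂ)) / 2, (v 0 - v 1 * Complex.I) / 2;
      (v 0 + v 1 * Complex.I) / 2, (1 - (v 2 : ℂ)) / 2] := by
  ext i j
  fin_cases i <;> fin_cases j <;>
    simp [blochMatrix, pauliXYZ, pauli, Fin.sum_univ_three] <;> ring

lemma trace_blochMatrix (v : Fin 3 → ℝ) : (blochMatrix v).trace = 1 := by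
  simp [blochMatrix_eq, Matrix.trace_fin_two]; ring

lemma trace_pauliXYZ_mul_blochMatrix (v : Fin 3 → ℝ) (i : Fin 3) :
    (pauliXYZ i * blochMatrix v).trace = v i := by
  fin_cases i <;> simp [blochMatrix_eq, pauliXYZ, pauli, Matrix.trace_fin_two]
  · ring
  · linear_combination -(v 1 : ℂ) * Complex.I_sq
  · ring

lemma det_blochMatrix (v : Fin 3 → ℝ) :
    (blochMatrix v).det = ((1 - ∑ i, v i ^ 2) / 4 : ℝ) := by
  rw [blochMatrix_eq, Matrix.det_fin_two_of]
  push_cast [Fin.sum_univ_three]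
  linear_combination ((v 1 : ℂ) ^ 2 / 4) * Complex.I_sq

lemma isHermitian_blochMatrix (v : Fin 3 → ℝ) : (blochMatrix v).IsHermitian := by
  ext i j
  fin_cases i <;> fin_cases j <;>
    simp [blochMatrix_eq, Matrix.conjTranspose_apply, Complex.conj_ofReal, sub_eq_add_neg]

lemma blochMatrix_mul_self {v : Fin 3 → ℝ} (hv : ∑ i, v i ^ 2 = 1) :
    blochMatrix v * blochMatrix v = blochMatrix v := by
  have hC : ((v 0 : ℂ)) ^ 2 + (v 1 : ℂ) ^ 2 + (v 2 : ℂ) ^ 2 = 1 := by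
    exact_mod_cast (Fin.sum_univ_three _).symm.trans hv
  rw [blochMatrix_eq]
  ext i j
  fin_cases i <;> fin_cases j <;>
    simp [Matrix.mul_apply, Fin.sum_univ_two] <;> ring_nf <;>
    rw [Complex.I_sq] <;> linear_combination hC / 4

lemma posSemidef_blochMatrix {v : Fin 3 → ℝ} (hv : ∑ i, v i ^ 2 = 1) :
    (blochMatrix v).PosSemidef := by
  have h := Matrix.posSemidef_conjTranspose_mul_self (blochMatrix v)
  rwa [(isHermitian_blochMatrix v).eq, blochMatrix_mul_self hv] at h

lemma sum_sq_le_one_of_posSemidef_blochMatrix {v : Fin 3 → ℝ}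
    (h : (blochMatrix v).PosSemidef) : ∑ i, v i ^ 2 ≤ 1 := by
  have := h.det_nonneg
  rw [det_blochMatrix, Complex.zero_le_real] at this
  linarith

lemma normalForm_blochMatrix (D t v : Fin 3 → ℝ) :
    normalForm D t (blochMatrix v) = blochMatrix fun i => D i * v i + t i := by
  simp only [normalForm, trace_blochMatrix, trace_pauliXYZ_mul_blochMatrix]
  rw [blochMatrix, smul_add, smul_add, add_assoc, Finset.smul_sum, Finset.smul_sum,
    ← Finset.sum_add_distrib]
  congr 2 with i
  rw [smul_smul, smul_smul, ← add_smul]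
  push_cast
  ring_nf

section Objective

variable {ι : Type*} [Fintype ι] {D t a : ι → ℝ}

def SphereMapsIntoBall (D t : ι → ℝ) : Prop :=
  ∀ a : ι → ℝ, ∑ i, a i ^ 2 = 1 → ∑ i, (D i * a i + t i) ^ 2 ≤ 1

def upsilonObjective (D t a : ι → ℝ) : ℝ :=
  ∑ i, a i ^ 2 * D i ^ 2 + (∑ i, a i * t i) ^ 2

lemma continuous_upsilonObjective (D t : ι → ℝ) : Continuous (upsilonObjective D t) := by
  unfold upsilonObjective
  fun_prop

lemma isCompact_setOf_sum_sq_eq_one : IsCompact {a : ι → ℝ | ∑ i, a i ^ 2 = 1} := by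
  refine Metric.isCompact_of_isClosed_isBounded (isClosed_eq (by fun_prop) continuous_const)
    ((Metric.isBounded_closedBall (x := 0) (r := 1)).subset fun a ha => ?_)
  rw [mem_closedBall_zero_iff, pi_norm_le_iff_of_nonneg zero_le_one]
  intro i
  rw [Real.norm_eq_abs, ← sq_le_one_iff_abs_le_one, ← show ∑ j, a j ^ 2 = 1 from ha]
  exact Finset.single_le_sum (fun j _ => sq_nonneg (a j)) (Finset.mem_univ i)

lemma sum_mul_add_sq (D t a : ι → ℝ) :
    ∑ i, (D i * a i + t i) ^ 2 =
      ∑ i, a i ^ 2 * D i ^ 2 + 2 * ∑ i, D i * a i * t i + ∑ i, t i ^ 2 := by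
  have h (i : ι) :
      (D i * a i + t i) ^ 2 = a i ^ 2 * D i ^ 2 + 2 * (D i * a i * t i) + t i ^ 2 := by
    ring
  simp only [h, Finset.sum_add_distrib, ← Finset.mul_sum]

lemma sum_sub_mul_sq (ha : ∑ i, a i ^ 2 = 1) :
    ∑ i, (t i - (∑ j, a j * t j) * a i) ^ 2 = ∑ i, t i ^ 2 - (∑ i, a i * t i) ^ 2 := by
  set c := ∑ j, a j * t j
  have h (i : ι) : (t i - c * a i) ^ 2 = t i ^ 2 - 2 * c * (a i * t i) + c ^ 2 * a i ^ 2 := by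
    ring
  simp only [h, Finset.sum_add_distrib, Finset.sum_sub_distrib, ← Finset.mul_sum, ha]
  ring

lemma sum_sq_mul_sq_lt_one (ha : ∑ i, a i ^ 2 = 1) (hD : ∀ i, D i ^ 2 < 1) :
    ∑ i, a i ^ 2 * D i ^ 2 < 1 := by
  obtain ⟨i, hi⟩ : ∃ i, a i ≠ 0 := by
    by_contra! h
    simp [h] at ha
  calc ∑ i, a i ^ 2 * D i ^ 2 < ∑ i, a i ^ 2 * 1 :=
        Finset.sum_lt_sum (fun j _ => mul_le_mul_of_nonneg_left (hD j).le (sq_nonneg _))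
          ⟨i, Finset.mem_univ i, mul_lt_mul_of_pos_left (hD i) (by positivity)⟩
    _ = 1 := by simp [ha]

lemma sum_sq_mul_sq_eq_zero_of_sum_mul_sq_eq_zero
    (hsign : (∀ i, 0 ≤ D i) ∨ (∀ i, D i ≤ 0))
    (h : ∑ i, D i * a i ^ 2 = 0) : ∑ i, a i ^ 2 * D i ^ 2 = 0 := by
  have hterm : ∀ i, D i * a i ^ 2 = 0 := by
    rcases hsign with hD | hD
    · exact fun i => (Finset.sum_eq_zero_iff_of_nonneg fun j _ =>
        mul_nonneg (hD j) (sq_nonneg _)).1 h i (Finset.mem_univ i)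
    · exact fun i => (Finset.sum_eq_zero_iff_of_nonpos fun j _ =>
        mul_nonpos_of_nonpos_of_nonneg (hD j) (sq_nonneg _)).1 h i (Finset.mem_univ i)
  exact Finset.sum_eq_zero fun i _ => by linear_combination D i * hterm i

lemma sum_sq_mul_sq_add_two_abs_add_sum_sq_le_one
    (hball : SphereMapsIntoBall D t)
    (ha : ∑ i, a i ^ 2 = 1) :
    ∑ i, a i ^ 2 * D i ^ 2 + 2 * |∑ i, D i * a i * t i| + ∑ i, t i ^ 2 ≤ 1 := by
  have hplus := hball a ha
  have hminus := hball (-a) (by simpa using ha)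
  rw [sum_mul_add_sq] at hplus hminus
  simp only [Pi.neg_apply, neg_sq, mul_neg, neg_mul, Finset.sum_neg_distrib] at hminus
  rcases abs_cases (∑ i, D i * a i * t i) with ⟨h, -⟩ | ⟨h, -⟩ <;> linarith

lemma sum_sq_mul_sq_add_sum_sq_le_one
    (hball : SphereMapsIntoBall D t)
    (ha : ∑ i, a i ^ 2 = 1) :
    ∑ i, a i ^ 2 * D i ^ 2 + ∑ i, t i ^ 2 ≤ 1 := by
  linarith [sum_sq_mul_sq_add_two_abs_add_sum_sq_le_one hball ha,
    abs_nonneg (∑ i, D i * a i * t i)]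

lemma upsilonObjective_le_one
    (hball : SphereMapsIntoBall D t)
    (ha : ∑ i, a i ^ 2 = 1) : upsilonObjective D t a ≤ 1 := by
  have hbound := sum_sq_mul_sq_add_sum_sq_le_one hball ha
  have hperp : 0 ≤ ∑ i, (t i - (∑ j, a j * t j) * a i) ^ 2 := by positivity
  rw [sum_sub_mul_sq ha] at hperp
  unfold upsilonObjective
  linarith

lemma sum_sq_lt_one_of_sq_pos
    (hball : SphereMapsIntoBall D t)
    {i : ι} (hD : 0 < D i ^ 2) : ∑ i, t i ^ 2 < 1 := by
  classical
  have h := sum_sq_mul_sq_add_sum_sq_le_one hball (a := Pi.single i 1)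
    (by simp [Pi.single_apply])
  simp [Pi.single_apply] at h
  linarith

lemma upsilonObjective_lt_one
    (hball : SphereMapsIntoBall D t)
    (hsign : (∀ i, 0 ≤ D i) ∨ (∀ i, D i ≤ 0))
    (hstrict : ((∃ i, 0 < D i ^ 2) ∧ ∀ i, D i ^ 2 < 1) ∨
      (0 < ∑ i, t i ^ 2 ∧ ∑ i, t i ^ 2 < 1))
    (ha : ∑ i, a i ^ 2 = 1) : upsilonObjective D t a < 1 := by
  have hbound := sum_sq_mul_sq_add_two_abs_add_sum_sq_le_one hball ha
  have hperp := sum_sub_mul_sq (t := t) ha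
  unfold upsilonObjective
  set c := ∑ i, a i * t i
  rcases (Finset.sum_nonneg fun i _ => sq_nonneg (t i - c * a i)).lt_or_eq with hpos | hzero
  · linarith [abs_nonneg (∑ i, D i * a i * t i)]
  -- equality in Cauchy–Schwarz: `t` is parallel to `a`
  have htc (i : ι) : t i = c * a i := by
    have := (Finset.sum_eq_zero_iff_of_nonneg fun j _ => sq_nonneg (t j - c * a j)).1
      hzero.symm i (Finset.mem_univ i)
    linarith [pow_eq_zero_iff two_ne_zero |>.1 this]
  have hcross : ∑ i, D i * a i * t i = c * ∑ i, D i * a i ^ 2 := by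
    simp only [htc, Finset.mul_sum]
    exact Finset.sum_congr rfl fun i _ => by ring
  rcases eq_or_ne (c * ∑ i, D i * a i ^ 2) 0 with hzero' | hne
  · rcases mul_eq_zero.1 hzero' with hc | hr
    · rcases hstrict with ⟨-, hD⟩ | ⟨ht, -⟩
      · rw [hc]
        simpa using sum_sq_mul_sq_lt_one ha hD
      · linarith [show c ^ 2 = 0 by simp [hc]]
    · have ht : ∑ i, t i ^ 2 < 1 := by
        rcases hstrict with ⟨⟨i, hi⟩, -⟩ | ⟨-, ht⟩
        exacts [sum_sq_lt_one_of_sq_pos hball hi, ht]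
      linarith [sum_sq_mul_sq_eq_zero_of_sum_mul_sq_eq_zero hsign hr]
  · have : 0 < |∑ i, D i * a i * t i| := by
      rw [hcross]
      exact abs_pos.2 hne
    linarith

end Objective

lemma sphereMapsIntoBall_of_posSemidef_normalForm {D t : Fin 3 → ℝ}
    (hpos : ∀ ρ : QMat, ρ.PosSemidef → ρ.trace = 1 → (normalForm D t ρ).PosSemidef) :
    SphereMapsIntoBall D t := by
  intro a ha
  have h := hpos _ (posSemidef_blochMatrix ha) (trace_blochMatrix a)
  rw [normalForm_blochMatrix] at h
  exact sum_sq_le_one_of_posSemidef_blochMatrix h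

lemma upsilon_eq_sSup_image (D t : Fin 3 → ℝ) :
    Upsilon D t = sSup (upsilonObjective D t '' {a | ∑ i, a i ^ 2 = 1}) := by
  unfold Upsilon
  congr 1
  ext r
  simp [upsilonObjective, eq_comm]

/-- Constraint on normal-form parameters: if the normal-form map `N'`
with parameters `(D, t)` (entries of `D` all of the same sign) maps density matrices to
density matrices, then `Υ(D,t) ≤ 1`; and the inequality is strict whenever
`0 < max(D_X², D_Y², D_Z²) < 1` or `0 < t_X² + t_Y² + t_Z² < 1`. -/
theorem stmt_0 (D t : Fin 3 → ℝ)
    (hsign : (∀ i, 0 ≤ D i) ∨ (∀ i, D i ≤ 0))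
    (hchan : ∀ ρ : QMat, ρ.PosSemidef → Matrix.trace ρ = 1 →
      (normalForm D t ρ).PosSemidef ∧ Matrix.trace (normalForm D t ρ) = 1) :
    Upsilon D t ≤ 1 ∧
      ((((∃ i, 0 < D i ^ 2) ∧ ∀ i, D i ^ 2 < 1) ∨
          (0 < ∑ i, t i ^ 2 ∧ (∑ i, t i ^ 2) < 1)) →
        Upsilon D t < 1) := by
  have hball : SphereMapsIntoBall D t :=
    sphereMapsIntoBall_of_posSemidef_normalForm fun ρ hρ htr => (hchan ρ hρ htr).1
  have hne : {a : Fin 3 → ℝ | ∑ i, a i ^ 2 = 1}.Nonempty :=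
    ⟨Pi.single 0 1, by simp [Pi.single_apply]⟩
  rw [upsilon_eq_sSup_image]
  refine ⟨Real.sSup_le (Set.forall_mem_image.2 fun a => upsilonObjective_le_one hball)
    zero_le_one, fun hstrict => ?_⟩
  exact (isCompact_setOf_sum_sq_eq_one.sSup_lt_iff_of_continuous hne
    (continuous_upsilonObjective D t).continuousOn 1).2
    fun a => upsilonObjective_lt_one hball hsign hstrict

end
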